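/- Let (Ω,Σ,μ) be a σ-finite measure space and (Π_k)_{k≥1} a sequence of countable measurable partitions of Ω into atoms of positive finite measure such that Π_{k+1} refines Π_k for every k, and let E_k f = Σ_{A∈Π_k} (μ(A)^{-1}∫_A f dμ)·1_A. Assume the filtration is regular with constant c ≥ 1: for every k ≥ 2 and every A ∈ Π_k, the unique atom Â ∈ Π_{k−1} containing A satisfies μ(Â) ≤ c·μ(A). Then for every f ∈ L_2(μ) and every k ≥ 2: ess sup_Ω E_k(|f − E_{k−1}f|²) ≤ (1 + c)·sup_{j≥1} ess sup_Ω E_j(|f − E_j f|²). -/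

import Mathlib

open MeasureTheory ENNReal

/-- An atomic σ-subalgebra of the ambient σ-algebra, encoded by the countable
measurable partition of `Ω` into atoms of positive finite measure generating it. -/
structure AtomicPartition {Ω : Type*} {m : MeasurableSpace Ω} (μ : Measure Ω) where
  ι : Type
  countable : Countable ι
  atom : ι → Set Ω
  measurableSet : ∀ i, MeasurableSet (atom i)
  disjoint : Pairwise (Function.onFun Disjoint atom)
  cover : ⋃ i, atom i = Set.univ
  pos : ∀ i, 0 < μ (atom i)
  lt_top : ∀ i, μ (atom i) < ∞

namespace AtomicPartition

variable {Ω : Type*} {m : MeasurableSpace Ω} {μ : Measure Ω}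

/-- The σ-algebra generated by the atoms. -/
def sigma (P : AtomicPartition μ) : MeasurableSpace Ω :=
  MeasurableSpace.generateFrom (Set.range P.atom)

/-- The conditional expectation onto the atomic σ-algebra:
`E f = ∑_A (μ(A)⁻¹ ∫_A f dμ) · 1_A`. -/
noncomputable def condExp (P : AtomicPartition μ) {E : Type*} [NormedAddCommGroup E]
    [NormedSpace ℝ E] (f : Ω → E) : Ω → E := fun x =>
  ∑' i, Set.indicator (P.atom i)
    (fun _ => (μ (P.atom i)).toReal⁻¹ • ∫ y in P.atom i, f y ∂μ) x

end AtomicPartition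

/-- `|R_B|`: the number (in `ℝ≥0∞`) of atoms of `Pa` meeting the atom `Pb.atom j`
in positive measure. -/
noncomputable def rCard {Ω : Type*} {m : MeasurableSpace Ω} (μ : Measure Ω)
    (Pa Pb : AtomicPartition μ) (j : Pb.ι) : ℝ≥0∞ :=
  ∑' _i : {i : Pa.ι // 0 < μ (Pa.atom i ∩ Pb.atom j)}, 1

/-- `∑_{B ∈ R_A} |R_B| · μ(A∩B)² / (μ(A)μ(B))` for the atom `A = Pa.atom i`
(terms with `μ(A∩B) = 0` vanish, so we may sum over all atoms of `Pb`). -/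
noncomputable def atomSum {Ω : Type*} {m : MeasurableSpace Ω} (μ : Measure Ω)
    (Pa Pb : AtomicPartition μ) (i : Pa.ι) : ℝ≥0∞ :=
  ∑' j : Pb.ι, rCard μ Pa Pb j * μ (Pa.atom i ∩ Pb.atom j) ^ 2 /
    (μ (Pa.atom i) * μ (Pb.atom j))

/-- `Σ_a ∩ Σ_b = {Ω, ∅}` modulo `μ`-null sets. -/
def TrivialIntersection {Ω : Type*} {m : MeasurableSpace Ω} (μ : Measure Ω)
    (ma mb : MeasurableSpace Ω) : Prop :=
  ∀ S T : Set Ω, MeasurableSet[ma] S → MeasurableSet[mb] T →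
    μ (symmDiff S T) = 0 → μ S = 0 ∨ μ Sᶜ = 0

/-- `(Σ_a, Σ_b)` is an admissible covering of `(Ω, Σ, μ)` with distinguished atoms
`A0, B0` (which are actual atoms when `μ` is finite, and `∅`, i.e. `none`, when
`μ(Ω) = ∞`). -/
structure IsAdmissibleCovering {Ω : Type*} {m : MeasurableSpace Ω} (μ : Measure Ω)
    (Pa Pb : AtomicPartition μ) (A0 : Option Pa.ι) (B0 : Option Pb.ι) : Prop where
  trivial_inter : TrivialIntersection μ Pa.sigma Pb.sigma
  infinite_case : μ Set.univ = ∞ → A0 = none ∧ B0 = none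
  finite_case : μ Set.univ < ∞ → A0.isSome ∧ B0.isSome
  small : min (⨆ i ∈ {i : Pa.ι | some i ≠ A0}, atomSum μ Pa Pb i)
      (⨆ j ∈ {j : Pb.ι | some j ≠ B0}, atomSum μ Pb Pa j) < 1

/-! Let `g = |f - E_k f|²` and let the atom `A ∈ Π_{k+1}` lie in `B ∈ Π_k`. On `A`, `E_{k+1} g`
is the average of `g ≥ 0` over `A`, which is at most `μ(B)/μ(A) ≤ c` times its average over `B`;
the latter is the value of `E_k g` on `B`, hence bounded by the supremum on the right. -/

lemma setLAverage_le_mul_of_subset {Ω : Type*} {m : MeasurableSpace Ω} {μ : Measure Ω}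
    {A B : Set Ω} {C : ℝ≥0∞} (G : Ω → ℝ≥0∞) (hAB : A ⊆ B) (hB : μ B ≠ ∞)
    (hBA : μ B ≤ C * μ A) :
    ⨍⁻ y in A, G y ∂μ ≤ C * ⨍⁻ y in B, G y ∂μ := by
  rw [setLAverage_eq, setLAverage_eq]
  refine ENNReal.div_le_of_le_mul ?_
  rcases eq_or_ne (μ B) 0 with hB0 | hB0
  · simp [Measure.restrict_eq_zero.2 (measure_mono_null hAB hB0)]
  calc ∫⁻ y in A, G y ∂μ ≤ ∫⁻ y in B, G y ∂μ := lintegral_mono_set hAB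
    _ = (∫⁻ y in B, G y ∂μ) / μ B * μ B := (ENNReal.div_mul_cancel hB0 hB).symm
    _ ≤ C * ((∫⁻ y in B, G y ∂μ) / μ B) * μ A := by
      rw [mul_comm C, mul_assoc]; gcongr

namespace AtomicPartition

variable {Ω : Type*} {m : MeasurableSpace Ω} {μ : Measure Ω} (Q : AtomicPartition μ)

lemma exists_mem_atom (x : Ω) : ∃ i, x ∈ Q.atom i :=
  Set.mem_iUnion.1 (Q.cover ▸ Set.mem_univ x)

section NormedSpace

variable {E : Type*} [NormedAddCommGroup E] [NormedSpace ℝ E]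

lemma condExp_eq_setAverage (g : Ω → E) {i : Q.ι} {x : Ω} (hx : x ∈ Q.atom i) :
    Q.condExp g x = ⨍ y in Q.atom i, g y ∂μ := by
  rw [setAverage_eq, condExp, tsum_eq_single i fun j hj =>
    Set.indicator_of_notMem (fun hxj => (Q.disjoint hj).le_bot ⟨hxj, hx⟩) _]
  exact Set.indicator_of_mem hx _

/-- `E g` is constant on atoms, which have positive measure, so its essential supremum is
a true supremum. -/
lemma enorm_condExp_le_eLpNorm_top (g : Ω → E) (x : Ω) :
    ‖Q.condExp g x‖ₑ ≤ eLpNorm (Q.condExp g) ∞ μ := by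
  obtain ⟨i, hx⟩ := Q.exists_mem_atom x
  rw [eLpNorm_exponent_top]
  obtain ⟨y, hy, hle⟩ : ∃ y ∈ Q.atom i, ‖Q.condExp g y‖ₑ ≤ eLpNormEssSup (Q.condExp g) μ := by
    by_contra! hgt
    exact (Q.pos i).ne' <| measure_mono_null (fun y hy => (hgt y hy).not_ge)
      (ae_iff.1 ae_le_eLpNormEssSup)
  rwa [Q.condExp_eq_setAverage g hx, ← Q.condExp_eq_setAverage g hy]

lemma integrableOn_norm_sub_condExp_sq {f : Ω → E} (hf : MemLp f 2 μ) (i : Q.ι) :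
    IntegrableOn (fun y => ‖f y - Q.condExp f y‖ ^ 2) (Q.atom i) μ := by
  have : IsFiniteMeasure (μ.restrict (Q.atom i)) :=
    ⟨by rw [Measure.restrict_apply_univ]; exact Q.lt_top i⟩
  refine IntegrableOn.congr_fun
    ((hf.restrict _).sub (memLp_const (⨍ y in Q.atom i, f y ∂μ))).norm.integrable_sq
    (fun y hy => ?_) (Q.measurableSet i)
  simp only [Pi.sub_apply, Q.condExp_eq_setAverage f hy]

end NormedSpace

lemma enorm_condExp_eq_setLAverage {g : Ω → ℝ} (hg : 0 ≤ g) {i : Q.ι}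
    (hint : IntegrableOn g (Q.atom i) μ) {x : Ω} (hx : x ∈ Q.atom i) :
    ‖Q.condExp g x‖ₑ = ⨍⁻ y in Q.atom i, ENNReal.ofReal (g y) ∂μ := by
  have havg : 0 ≤ ⨍ y in Q.atom i, g y ∂μ := by
    rw [setAverage_eq, smul_eq_mul]
    exact mul_nonneg (inv_nonneg.2 measureReal_nonneg) (integral_nonneg hg)
  rw [Q.condExp_eq_setAverage g hx, Real.enorm_of_nonneg havg,
    ofReal_setAverage hint (ae_of_all _ hg), setLAverage_eq]

end AtomicPartition

theorem statement10_general {Ω : Type*} [MeasurableSpace Ω] (μ : Measure Ω)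
    (P : ℕ → AtomicPartition μ)
    (href : ∀ k, ∀ i : (P (k + 1)).ι, ∃ i' : (P k).ι,
      (P (k + 1)).atom i ⊆ (P k).atom i')
    (c : ℝ)
    (hreg : ∀ k, ∀ i : (P (k + 1)).ι, ∀ i' : (P k).ι,
      (P (k + 1)).atom i ⊆ (P k).atom i' →
      μ ((P k).atom i') ≤ ENNReal.ofReal c * μ ((P (k + 1)).atom i)) :
    ∀ f : Ω → ℂ, MemLp f 2 μ → ∀ k : ℕ,
      eLpNorm ((P (k + 1)).condExp fun y => ‖f y - (P k).condExp f y‖ ^ 2) ∞ μ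
        ≤ ENNReal.ofReal (1 + c) *
          ⨆ j : ℕ, eLpNorm ((P j).condExp fun y => ‖f y - (P j).condExp f y‖ ^ 2) ∞ μ := by
  intro f hf k
  rw [eLpNorm_exponent_top]
  refine eLpNormEssSup_le_of_ae_enorm_bound (ae_of_all _ fun x => ?_)
  set g : Ω → ℝ := fun y => ‖f y - (P k).condExp f y‖ ^ 2
  have hg : 0 ≤ g := fun y => sq_nonneg _
  obtain ⟨i, hx⟩ := (P (k + 1)).exists_mem_atom x
  obtain ⟨i', hsub⟩ := href k i
  have hint := (P k).integrableOn_norm_sub_condExp_sq hf i'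
  calc ‖(P (k + 1)).condExp g x‖ₑ
      = ⨍⁻ y in (P (k + 1)).atom i, ENNReal.ofReal (g y) ∂μ :=
        (P (k + 1)).enorm_condExp_eq_setLAverage hg (hint.mono_set hsub) hx
    _ ≤ ENNReal.ofReal c * ⨍⁻ y in (P k).atom i', ENNReal.ofReal (g y) ∂μ :=
        setLAverage_le_mul_of_subset _ hsub ((P k).lt_top i').ne (hreg k i i' hsub)
    _ = ENNReal.ofReal c * ‖(P k).condExp g x‖ₑ := by
        rw [(P k).enorm_condExp_eq_setLAverage hg hint (hsub hx)]
    _ ≤ ENNReal.ofReal c *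
          ⨆ j : ℕ, eLpNorm ((P j).condExp fun y => ‖f y - (P j).condExp f y‖ ^ 2) ∞ μ := by
        gcongr
        exact ((P k).enorm_condExp_le_eLpNorm_top g x).trans (le_iSup_of_le k le_rfl)
    _ ≤ _ := by gcongr; linarith

/-- `BMO ≲ bmo` for regular atomic filtrations.  If `(Π_k)` is a
refining sequence of atomic partitions which is regular with constant `c` (each parent
atom has measure at most `c` times that of its child), then for every `f ∈ L₂(μ)` and
every level `k`,
`ess sup E_{k+1}(|f - E_k f|²) ≤ (1+c) · sup_j ess sup E_j(|f - E_j f|²)`. -/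
theorem statement10 {Ω : Type*} [MeasurableSpace Ω] (μ : Measure Ω) [SigmaFinite μ]
    (P : ℕ → AtomicPartition μ)
    (href : ∀ k, ∀ i : (P (k + 1)).ι, ∃ i' : (P k).ι,
      (P (k + 1)).atom i ⊆ (P k).atom i')
    (c : ℝ) (hc : 1 ≤ c)
    (hreg : ∀ k, ∀ i : (P (k + 1)).ι, ∀ i' : (P k).ι,
      (P (k + 1)).atom i ⊆ (P k).atom i' →
      μ ((P k).atom i') ≤ ENNReal.ofReal c * μ ((P (k + 1)).atom i)) :
    ∀ f : Ω → ℂ, MemLp f 2 μ → ∀ k : ℕ,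
      eLpNorm ((P (k + 1)).condExp fun y => ‖f y - (P k).condExp f y‖ ^ 2) ∞ μ
        ≤ ENNReal.ofReal (1 + c) *
          ⨆ j : ℕ, eLpNorm ((P j).condExp fun y => ‖f y - (P j).condExp f y‖ ^ 2) ∞ μ :=
  statement10_general μ P href c hreg
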